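/- arXiv:1710.02058 — 2 statements merged into one kernel-verified Lean document; each statement's English description precedes it below -/
import Mathlib

section
/- Let ℓ, m ≥ 1 and let v_1,…,v_m : Fin ℓ → ℝ be vectors all of whose entries lie in {0, 2}. Define the row points r_i ∈ ℝ^m by (r_i)_j = (v_j)_i for i ∈ Fin ℓ, and the unit points e_j ∈ ℝ^m with (e_j)_j = 1 and (e_j)_{j'} = 0 for j' ≠ j. Let X = {r_i : i ∈ Fin ℓ} ∪ {e_j : j ∈ Fin m}. Then for every j, the point e_j belongs to the skyline of X if and only if v_j is the all-zero vector. -/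
/-!
A row point `r i` is nonnegative and has entry `v j i` at coordinate `j`. If `v j i = 2`, then
`r i` strictly dominates the unit point `e j`. If `v j = 0`, every point of `X` other than `e j`
itself has entry `0 < 1` at coordinate `j`, so nothing strictly dominates `e j`.
-/

/-- `q` strictly dominates `p` if `q` is at least `p` in every coordinate and
strictly larger in at least one coordinate. -/
def StrictlyDominates {m : ℕ} (q p : Fin m → ℝ) : Prop :=
  (∀ j, p j ≤ q j) ∧ ∃ j, p j < q j

/-- The skyline of a set of points: those points not strictly dominated by any
other point of the set. -/
def skyline {m : ℕ} (X : Set (Fin m → ℝ)) : Set (Fin m → ℝ) :=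
  {p ∈ X | ∀ q ∈ X, ¬ StrictlyDominates q p}

section StrictlyDominates

variable {m : ℕ}

theorem not_strictlyDominates_self (p : Fin m → ℝ) : ¬ StrictlyDominates p p :=
  fun ⟨_, _, hlt⟩ => lt_irrefl _ hlt

theorem not_strictlyDominates_of_apply_lt {p q : Fin m → ℝ} {j : Fin m} (h : q j < p j) :
    ¬ StrictlyDominates q p :=
  fun hdom => (hdom.1 j).not_gt h

theorem strictlyDominates_single_one {q : Fin m → ℝ} {j : Fin m} (hq : 0 ≤ q) (hj : 1 < q j) :
    StrictlyDominates q (Pi.single j 1) := by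
  refine ⟨fun j' => ?_, j, by simpa using hj⟩
  rcases eq_or_ne j' j with rfl | hne
  · simpa using hj.le
  · simpa [Pi.single_apply, hne] using hq j'

end StrictlyDominates

theorem unit_point_in_skyline_iff_null_vector_general
    (ℓ m : ℕ)
    (v : Fin m → Fin ℓ → ℝ)
    (hv : ∀ j i, v j i = 0 ∨ v j i = 2)
    (r : Fin ℓ → Fin m → ℝ) (hr : ∀ i j, r i j = v j i)
    (e : Fin m → Fin m → ℝ)
    (he : ∀ j j', e j j' = if j' = j then 1 else 0)
    (X : Set (Fin m → ℝ))
    (hX : X = {x | ∃ i, x = r i} ∪ {x | ∃ j, x = e j}) :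
    ∀ j, e j ∈ skyline X ↔ v j = 0 := by
  obtain rfl : e = fun j => Pi.single j 1 := by
    funext j j'
    simp [he, Pi.single_apply]
  have hr_nonneg (i : Fin ℓ) : 0 ≤ r i := fun j' => by
    rcases hv j' i with h | h <;> simp [hr, h]
  subst hX
  intro j
  constructor
  · intro hsky
    funext i
    refine (hv j i).resolve_right fun h2 => hsky.2 (r i) (Or.inl ⟨i, rfl⟩) ?_
    exact strictlyDominates_single_one (hr_nonneg i) (by rw [hr, h2]; norm_num)
  · intro hzero
    refine ⟨Or.inr ⟨j, rfl⟩, ?_⟩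
    rintro q (⟨i, rfl⟩ | ⟨k, rfl⟩)
    · exact not_strictlyDominates_of_apply_lt (j := j) (by simp [hr, hzero])
    · rcases eq_or_ne k j with rfl | hkj
      · exact not_strictlyDominates_self _
      · exact not_strictlyDominates_of_apply_lt (j := j) (by simp [hkj.symm])

/-- One block of the lower-bound reduction: the unit point `e j` is a skyline
point of the block iff the vector `v j` is the all-zero vector. -/
theorem unit_point_in_skyline_iff_null_vector
    (ℓ m : ℕ) (hℓ : 1 ≤ ℓ) (hm : 1 ≤ m)
    (v : Fin m → Fin ℓ → ℝ)
    (hv : ∀ j i, v j i = 0 ∨ v j i = 2)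
    (r : Fin ℓ → Fin m → ℝ) (hr : ∀ i j, r i j = v j i)
    (e : Fin m → Fin m → ℝ)
    (he : ∀ j j', e j j' = if j' = j then 1 else 0)
    (X : Set (Fin m → ℝ))
    (hX : X = {x | ∃ i, x = r i} ∪ {x | ∃ j, x = e j}) :
    ∀ j, e j ∈ skyline X ↔ v j = 0 :=
  unit_point_in_skyline_iff_null_vector_general ℓ m v hv r hr e he X hX
end

section
/- Let ℓ, m ≥ 1 and let v_1,…,v_m : Fin ℓ → ℝ be vectors all of whose entries lie in {0, 2}, each having at most one nonzero coordinate, and which are collision free: for each position i ∈ Fin ℓ there is at most one index j with (v_j)_i ≠ 0. Define the row points r_i ∈ ℝ^m by (r_i)_j = (v_j)_i, the unit points e_j ∈ ℝ^m with (e_j)_j = 1 and zeros elsewhere, and let X = {r_i : i ∈ Fin ℓ} ∪ {e_j : j ∈ Fin m}. Then the skyline of X equals {e_j : v_j = 0} ∪ {r_i : r_i ≠ 0}, and the skyline of X has exactly m elements. -/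
theorem StrictlyDominates.irrefl {m : ℕ} (p : Fin m → ℝ) : ¬ StrictlyDominates p p :=
  fun ⟨_, _, h⟩ => lt_irrefl _ h

theorem strictlyDominates_single_single {m : ℕ} (j : Fin m) {a b : ℝ} (h : a < b) :
    StrictlyDominates (Pi.single j b) (Pi.single j a) :=
  ⟨fun k => Pi.single_le_single.2 h.le k, j, by simpa using h⟩

theorem StrictlyDominates.eq_and_lt_of_single {m : ℕ} {j j' : Fin m} {a b : ℝ}
    (h : StrictlyDominates (Pi.single j' b) (Pi.single j a)) (ha : 0 < a) :
    j' = j ∧ a < b := by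
  obtain ⟨hle, k, hlt⟩ := h
  have hj : j' = j := by
    by_contra hne
    have := hle j
    rw [Pi.single_eq_same, Pi.single_eq_of_ne (Ne.symm hne)] at this
    linarith
  subst hj
  by_cases hk : k = j'
  · subst hk
    simpa using hlt
  · simp [Pi.single_eq_of_ne hk] at hlt

theorem StrictlyDominates.notMem_skyline {m : ℕ} {X : Set (Fin m → ℝ)} {p q : Fin m → ℝ}
    (h : StrictlyDominates q p) (hq : q ∈ X) : p ∉ skyline X :=
  fun hp => hp.2 q hq h

theorem injective_single_of_ne_zero {ι M : Type*} [DecidableEq ι] [Zero M] {c : ι → M}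
    (hc : ∀ j, c j ≠ 0) : Function.Injective fun j => Pi.single j (c j) := by
  intro a b hab
  by_contra hne
  have := congrFun hab a
  simp only [Pi.single_eq_same, Pi.single_eq_of_ne hne] at this
  exact hc a this

section Block

variable {ι : Type*} {m : ℕ} (v : Fin m → ι → ℝ)

def rowPoint (i : ι) : Fin m → ℝ := fun j => v j i

def blockPoints : Set (Fin m → ℝ) :=
  Set.range (rowPoint v) ∪ Set.range fun j => Pi.single j 1

variable {v} (hv : ∀ j i, v j i = 0 ∨ v j i = 2)
  (hcf : ∀ i j j', v j i ≠ 0 → v j' i ≠ 0 → j = j')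
include hv hcf

theorem rowPoint_eq_single {i : ι} {j : Fin m} (h : v j i ≠ 0) :
    rowPoint v i = Pi.single j 2 := by
  funext k
  by_cases hk : k = j
  · subst hk
    simpa [rowPoint] using (hv k i).resolve_left h
  · rw [Pi.single_eq_of_ne hk]
    by_contra h'
    exact hk (hcf i k j h' h)

theorem exists_rowPoint_eq_single {j : Fin m} (h : v j ≠ 0) :
    ∃ i, rowPoint v i = Pi.single j 2 :=
  let ⟨i, hi⟩ := Function.ne_iff.1 h
  ⟨i, rowPoint_eq_single hv hcf hi⟩

theorem exists_rowPoint_eq_single_of_ne_zero {i : ι} (h : rowPoint v i ≠ 0) :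
    ∃ j, v j ≠ 0 ∧ rowPoint v i = Pi.single j 2 :=
  let ⟨j, hj⟩ := Function.ne_iff.1 h
  ⟨j, fun h0 => hj (congrFun h0 i), rowPoint_eq_single hv hcf hj⟩

theorem single_one_mem_skyline_iff {j : Fin m} :
    Pi.single j 1 ∈ skyline (blockPoints v) ↔ v j = 0 := by
  constructor
  · intro hsky
    by_contra h
    obtain ⟨i, hi⟩ := exists_rowPoint_eq_single hv hcf h
    exact (strictlyDominates_single_single j one_lt_two).notMem_skyline
      (Or.inl ⟨i, hi⟩) hsky
  · intro h0
    refine ⟨Or.inr ⟨j, rfl⟩, ?_⟩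
    rintro q (⟨i, rfl⟩ | ⟨j', rfl⟩) hdom
    · have := hdom.1 j
      norm_num [rowPoint, h0] at this
    · exact lt_irrefl _ (hdom.eq_and_lt_of_single one_pos).2

theorem rowPoint_mem_skyline_iff [NeZero m] {i : ι} :
    rowPoint v i ∈ skyline (blockPoints v) ↔ rowPoint v i ≠ 0 := by
  constructor
  · intro hsky h0
    rw [h0, ← Pi.single_zero 0] at hsky
    exact (strictlyDominates_single_single 0 one_pos).notMem_skyline
      (Or.inr ⟨0, rfl⟩) hsky
  · intro hne
    obtain ⟨j, -, hj⟩ := exists_rowPoint_eq_single_of_ne_zero hv hcf hne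
    refine ⟨Or.inl ⟨i, rfl⟩, ?_⟩
    rw [hj]
    rintro q (⟨i', rfl⟩ | ⟨j', rfl⟩) hdom
    · have hj' : v j i' ≠ 0 := by
        have := hdom.1 j
        simp only [Pi.single_eq_same, rowPoint] at this
        linarith
      rw [rowPoint_eq_single hv hcf hj'] at hdom
      exact StrictlyDominates.irrefl _ hdom
    · linarith [(hdom.eq_and_lt_of_single two_pos).2]

theorem skyline_blockPoints [NeZero m] :
    skyline (blockPoints v) =
      {x | ∃ j, v j = 0 ∧ x = Pi.single j 1} ∪ {x | ∃ i, rowPoint v i ≠ 0 ∧ x = rowPoint v i} := by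
  ext x
  constructor
  · intro hx
    obtain ⟨i, rfl⟩ | ⟨j, rfl⟩ := hx.1
    · exact Or.inr ⟨i, (rowPoint_mem_skyline_iff hv hcf).1 hx, rfl⟩
    · exact Or.inl ⟨j, (single_one_mem_skyline_iff hv hcf).1 hx, rfl⟩
  · rintro (⟨j, hj, rfl⟩ | ⟨i, hi, rfl⟩)
    · exact (single_one_mem_skyline_iff hv hcf).2 hj
    · exact (rowPoint_mem_skyline_iff hv hcf).2 hi

open Classical in
theorem skyline_blockPoints_eq_range [NeZero m] :
    skyline (blockPoints v) = Set.range fun j => Pi.single j (if v j = 0 then (1 : ℝ) else 2) := by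
  ext x
  constructor
  · intro hx
    obtain ⟨i, rfl⟩ | ⟨j, rfl⟩ := hx.1
    · obtain ⟨j, hj, hi⟩ :=
        exists_rowPoint_eq_single_of_ne_zero hv hcf ((rowPoint_mem_skyline_iff hv hcf).1 hx)
      exact ⟨j, by simp [hj, hi]⟩
    · exact ⟨j, by simp [(single_one_mem_skyline_iff hv hcf).1 hx]⟩
  · rintro ⟨j, rfl⟩
    dsimp only
    split_ifs with h
    · exact (single_one_mem_skyline_iff hv hcf).2 h
    · obtain ⟨i, hi⟩ := exists_rowPoint_eq_single hv hcf h
      rw [← hi, rowPoint_mem_skyline_iff hv hcf, hi]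
      simp

end Block

theorem collision_free_block_skyline_general
    (ℓ m : ℕ) (hm : 1 ≤ m)
    (v : Fin m → Fin ℓ → ℝ)
    (hv : ∀ j i, v j i = 0 ∨ v j i = 2)
    (hcf : ∀ i j j', v j i ≠ 0 → v j' i ≠ 0 → j = j')
    (r : Fin ℓ → Fin m → ℝ) (hr : ∀ i j, r i j = v j i)
    (e : Fin m → Fin m → ℝ)
    (he : ∀ j j', e j j' = if j' = j then 1 else 0)
    (X : Set (Fin m → ℝ))
    (hX : X = {x | ∃ i, x = r i} ∪ {x | ∃ j, x = e j}) :
    skyline X = {x | ∃ j, v j = 0 ∧ x = e j} ∪ {x | ∃ i, r i ≠ 0 ∧ x = r i} ∧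
      (skyline X).ncard = m := by
  have : NeZero m := ⟨by omega⟩
  obtain rfl : r = rowPoint v := funext₂ hr
  obtain rfl : e = fun j => Pi.single j 1 := funext₂ fun j j' => by rw [he, Pi.single_apply]
  obtain rfl : X = blockPoints v := by
    simp only [hX, blockPoints, Set.range, eq_comm]
  refine ⟨skyline_blockPoints hv hcf, ?_⟩
  rw [skyline_blockPoints_eq_range hv hcf,
    Set.ncard_range_of_injective (injective_single_of_ne_zero fun j => by split_ifs <;> norm_num),
    Nat.card_fin]

/-- A collision-free block of the lower-bound construction has exactly `m`
skyline points: the unit points of null vectors and the nonzero row points. -/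
theorem collision_free_block_skyline
    (ℓ m : ℕ) (hℓ : 1 ≤ ℓ) (hm : 1 ≤ m)
    (v : Fin m → Fin ℓ → ℝ)
    (hv : ∀ j i, v j i = 0 ∨ v j i = 2)
    (hone : ∀ j i i', v j i ≠ 0 → v j i' ≠ 0 → i = i')
    (hcf : ∀ i j j', v j i ≠ 0 → v j' i ≠ 0 → j = j')
    (r : Fin ℓ → Fin m → ℝ) (hr : ∀ i j, r i j = v j i)
    (e : Fin m → Fin m → ℝ)
    (he : ∀ j j', e j j' = if j' = j then 1 else 0)
    (X : Set (Fin m → ℝ))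
    (hX : X = {x | ∃ i, x = r i} ∪ {x | ∃ j, x = e j}) :
    skyline X = {x | ∃ j, v j = 0 ∧ x = e j} ∪ {x | ∃ i, r i ≠ 0 ∧ x = r i} ∧
      (skyline X).ncard = m :=
  collision_free_block_skyline_general ℓ m hm v hv hcf r hr e he X hX
end
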